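/- Let p be a prime, n a positive integer, d a positive integer, and F(x) = x^d on F_{p^n}. If gcd(d, p^n − 1) = 1, then F is 0-differential bent₁. If gcd(d, p^n − 1) = 2, then F is not 0-differential bent₁. -/

import Mathlib

open Finset

noncomputable section

/-- Finite fields `GaloisField p n` are finite; fix a `Fintype` instance. -/
noncomputable instance (p n : ℕ) [Fact p.Prime] : Fintype (GaloisField p n) :=
  Fintype.ofFinite _

/-- `ζ_q = exp(2πi/q)`. -/
noncomputable def zetaC (q : ℕ) : ℂ := Complex.exp (2 * Real.pi * Complex.I / q)

/-- `ζ_p^t` for `t ∈ F_p`, computed via the integer lift of `t`. -/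
noncomputable def eChar (p : ℕ) (t : ZMod p) : ℂ := zetaC p ^ t.val

/-- The absolute trace `Tr_k : F_{p^k} → F_p`. -/
noncomputable def trAbs (p k : ℕ) [Fact p.Prime] (x : GaloisField p k) : ZMod p :=
  Algebra.trace (ZMod p) (GaloisField p k) x

/-- The Walsh transform `W_F(a,b) = ∑_x ζ_p^{Tr_m(b·F(x)) − Tr_n(a·x)}`. -/
noncomputable def Walsh (p n m : ℕ) [Fact p.Prime] (F : GaloisField p n → GaloisField p m)
    (a : GaloisField p n) (b : GaloisField p m) : ℂ :=
  ∑ x : GaloisField p n, eChar p (trAbs p m (b * F x) - trAbs p n (a * x))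

/-- The `c`-crosscorrelation `cC_{F,G}(u,b) = ∑_z ζ_p^{Tr_m(b(F(z+u) − c·G(z)))}`. -/
noncomputable def crossCorr (p n m : ℕ) [Fact p.Prime]
    (F G : GaloisField p n → GaloisField p m) (c : GaloisField p m)
    (u : GaloisField p n) (b : GaloisField p m) : ℂ :=
  ∑ x : GaloisField p n, eChar p (trAbs p m (b * (F (x + u) - c * G x)))

/-- The `c`-autocorrelation `cC_F = cC_{F,F}`. -/
noncomputable def autoCorr (p n m : ℕ) [Fact p.Prime]
    (F : GaloisField p n → GaloisField p m) (c : GaloisField p m)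
    (u : GaloisField p n) (b : GaloisField p m) : ℂ :=
  crossCorr p n m F F c u b

/-- `F` is perfect₁ `c`-nonlinear: `cC_F(u,b) = 0` for all `u ≠ 0`, `b ≠ 0`. -/
def PerfectCNonlinear1 (p n m : ℕ) [Fact p.Prime]
    (F : GaloisField p n → GaloisField p m) (c : GaloisField p m) : Prop :=
  ∀ u : GaloisField p n, u ≠ 0 → ∀ b : GaloisField p m, b ≠ 0 →
    autoCorr p n m F c u b = 0

/-- `F` is strictly perfect₁ `c`-nonlinear: `cC_F(u,b) = 0` for all `u`, all `b ≠ 0`. -/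
def StrictlyPerfectCNonlinear1 (p n m : ℕ) [Fact p.Prime]
    (F : GaloisField p n → GaloisField p m) (c : GaloisField p m) : Prop :=
  ∀ u : GaloisField p n, ∀ b : GaloisField p m, b ≠ 0 →
    autoCorr p n m F c u b = 0

/-- `F` is `c`-differential bent₁:
`W_F(x,b)·conj(W_F(x,bc)) = cC_F(0,b)` for all `x` and all `b ≠ 0`. -/
def CDifferentialBent1 (p n m : ℕ) [Fact p.Prime]
    (F : GaloisField p n → GaloisField p m) (c : GaloisField p m) : Prop :=
  ∀ x : GaloisField p n, ∀ b : GaloisField p m, b ≠ 0 →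
    Walsh p n m F x b * (starRingEnd ℂ) (Walsh p n m F x (b * c)) =
      autoCorr p n m F c 0 b

/-!
With `ψ(x) = ζ_p^{Tr_n(x)}` and `c = 0`, the Walsh transform at `b·c = 0` is `p^n·[x = 0]` and
`cC_F(0,b) = ∑ₓ ψ(b·F(x))`, so `F` is 0-differential bent₁ iff these sums vanish for all `b ≠ 0`.
By orthogonality, `∑_b ∑ₓ ψ(b·(F(x) - v)) = p^n·#F⁻¹(v)`, and when the sums vanish the left side
is `p^n`: so this happens iff `F` is a permutation. Finally `x ↦ x^d` permutes `F_{p^n}` when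
`gcd(d, p^n - 1) = 1`, and identifies `1` with `-1` when `d` is even and `p` is odd.
-/

namespace AddChar.IsPrimitive

variable {R R' : Type*} [CommRing R] [Fintype R] [CommRing R'] [IsDomain R']
  {ψ : AddChar R R'}

theorem sum_sum_mul_sub_eq_card_mul_card_fiber [DecidableEq R] (hψ : ψ.IsPrimitive)
    {α : Type*} [Fintype α] (F : α → R) (v : R) :
    ∑ b, ∑ x, ψ (b * (F x - v)) = Fintype.card R * #{x | F x = v} := by
  rw [Finset.sum_comm]
  simp_rw [sum_mulShift _ hψ, sub_eq_zero]
  simp [Finset.sum_ite, mul_comm]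

theorem bijective_iff_sum_eq_zero [CharZero R'] (hψ : ψ.IsPrimitive) (F : R → R) :
    Function.Bijective F ↔ ∀ b ≠ 0, ∑ x, ψ (b * F x) = 0 := by
  classical
  refine ⟨fun hF b hb => ?_, fun h => Function.bijective_iff_existsUnique _ |>.2 fun v => ?_⟩
  · rw [hF.sum_comp (fun y => ψ (b * y))]
    exact sum_eq_zero_of_ne_one (hψ hb)
  · have hfiber : (Fintype.card R : R') * #{x | F x = v} = Fintype.card R := by
      rw [← sum_sum_mul_sub_eq_card_mul_card_fiber hψ F v, Finset.sum_eq_single 0]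
      · simp
      · intro b _ hb
        simp_rw [mul_sub, sub_eq_add_neg, map_add_eq_mul, ← Finset.sum_mul, h b hb, zero_mul]
      · simp
    have hcard : #{x | F x = v} = 1 := by
      exact_mod_cast (mul_eq_left₀ (Nat.cast_ne_zero.2 Fintype.card_ne_zero)).1 hfiber
    obtain ⟨a, ha⟩ := Finset.card_eq_one.1 hcard
    have hmem (x : R) : F x = v ↔ x = a := by simpa using Finset.ext_iff.1 ha x
    exact ⟨a, (hmem a).2 rfl, fun x hx => (hmem x).1 hx⟩

end AddChar.IsPrimitive

section PowerMap

variable {K : Type*} [Field K] [Fintype K] {d : ℕ}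

theorem pow_bijective_of_coprime (hd : d ≠ 0) (hcop : d.Coprime (Fintype.card K - 1)) :
    Function.Bijective (· ^ d : K → K) := by
  refine Finite.injective_iff_bijective.1 fun x y (hxy : x ^ d = y ^ d) => ?_
  by_cases hx : x = 0
  · subst hx
    rw [zero_pow hd, eq_comm, pow_eq_zero_iff hd] at hxy
    exact hxy.symm
  by_cases hy : y = 0
  · subst hy
    rw [zero_pow hd, pow_eq_zero_iff hd] at hxy
    exact absurd hxy hx
  have hunits : (Nat.card Kˣ).Coprime d := by
    rwa [Nat.card_units, Nat.card_eq_fintype_card, Nat.coprime_comm]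
  have := hunits.pow_left_bijective.injective (a₁ := Units.mk0 x hx) (a₂ := Units.mk0 y hy)
    (Units.ext hxy)
  simpa using congrArg Units.val this

theorem pow_not_injective_of_two_dvd (hd : 2 ∣ d) (hK : 2 ∣ Fintype.card K - 1) :
    ¬ Function.Injective (· ^ d : K → K) := by
  have hchar : ringChar K ≠ 2 := by
    rw [Ne, FiniteField.even_card_iff_char_two]
    have := Fintype.card_pos (α := K)
    omega
  intro hinj
  refine Ring.neg_one_ne_one_of_char_ne_two hchar (hinj ?_)
  simp [(even_iff_two_dvd.2 hd).neg_one_pow]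

end PowerMap

section TraceCharacter

variable (p n : ℕ) [Fact p.Prime]

theorem eChar_eq_stdAddChar (t : ZMod p) : eChar p t = ZMod.stdAddChar t := by
  rw [ZMod.stdAddChar_apply, ZMod.toCircle_apply, eChar, zetaC, ← Complex.exp_nat_mul]
  ring_nf

def traceChar : AddChar (GaloisField p n) ℂ :=
  ZMod.stdAddChar.compAddMonoidHom (Algebra.trace (ZMod p) (GaloisField p n)).toAddMonoidHom

theorem eChar_trAbs (x : GaloisField p n) : eChar p (trAbs p n x) = traceChar p n x :=
  eChar_eq_stdAddChar p _

theorem isPrimitive_traceChar : (traceChar p n).IsPrimitive := by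
  refine AddChar.IsPrimitive.of_ne_one fun h => ?_
  obtain ⟨x, hx⟩ := Algebra.trace_surjective (ZMod p) (GaloisField p n) 1
  have hx' : ZMod.stdAddChar (1 : ZMod p) = ZMod.stdAddChar (0 : ZMod p) := by
    simpa [traceChar, hx] using DFunLike.congr_fun h x
  exact one_ne_zero (ZMod.injective_stdAddChar hx')

end TraceCharacter

section ZeroDifferentialBent

variable {p n : ℕ} [Fact p.Prime] (F : GaloisField p n → GaloisField p n)

theorem walsh_eq_sum_traceChar (a b : GaloisField p n) :
    Walsh p n n F a b = ∑ x, traceChar p n (b * F x - a * x) := by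
  refine Finset.sum_congr rfl fun x _ => ?_
  rw [← eChar_trAbs, trAbs, trAbs, trAbs, map_sub]

theorem walsh_zero_right [DecidableEq (GaloisField p n)] (a : GaloisField p n) :
    Walsh p n n F a 0 = if a = 0 then (Fintype.card (GaloisField p n) : ℂ) else 0 := by
  simp_rw [walsh_eq_sum_traceChar, zero_mul, zero_sub, ← neg_mul, mul_comm (-a),
    AddChar.sum_mulShift _ (isPrimitive_traceChar p n), neg_eq_zero,
    Nat.cast_ite, Nat.cast_zero]

theorem walsh_zero_left (b : GaloisField p n) :
    Walsh p n n F 0 b = ∑ x, traceChar p n (b * F x) := by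
  simp [walsh_eq_sum_traceChar]

theorem autoCorr_zero_zero (b : GaloisField p n) :
    autoCorr p n n F 0 0 b = ∑ x, traceChar p n (b * F x) := by
  simp [autoCorr, crossCorr, eChar_trAbs]

theorem cDifferentialBent1_zero_iff :
    CDifferentialBent1 p n n F 0 ↔ ∀ b ≠ 0, ∑ x, traceChar p n (b * F x) = 0 := by
  classical
  have hq : (Fintype.card (GaloisField p n) : ℂ) ≠ 1 := by
    exact_mod_cast Fintype.one_lt_card.ne'
  simp only [CDifferentialBent1, mul_zero, walsh_zero_right, autoCorr_zero_zero]
  refine ⟨fun h b hb => ?_, fun h a b hb => ?_⟩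
  · have := h 0 b hb
    rw [if_pos rfl, walsh_zero_left, map_natCast] at this
    exact (mul_right_eq_self₀.1 this).resolve_left hq
  · split_ifs with ha
    · simp [ha, walsh_zero_left, h b hb]
    · simp [h b hb]

theorem cDifferentialBent1_zero_iff_bijective :
    CDifferentialBent1 p n n F 0 ↔ Function.Bijective F := by
  rw [cDifferentialBent1_zero_iff, (isPrimitive_traceChar p n).bijective_iff_sum_eq_zero]

end ZeroDifferentialBent

theorem statement_7 (p n : ℕ) [Fact p.Prime] (hn : 0 < n) (d : ℕ) (hd : 0 < d) :
    (Nat.gcd d (p ^ n - 1) = 1 →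
      CDifferentialBent1 p n n (fun x => x ^ d) 0) ∧
    (Nat.gcd d (p ^ n - 1) = 2 →
      ¬ CDifferentialBent1 p n n (fun x => x ^ d) 0) := by
  have hcard : Fintype.card (GaloisField p n) = p ^ n := by
    rw [← Nat.card_eq_fintype_card, GaloisField.card p n hn.ne']
  simp only [cDifferentialBent1_zero_iff_bijective]
  refine ⟨fun hgcd => pow_bijective_of_coprime hd.ne' (hcard ▸ hgcd), fun hgcd hbij => ?_⟩
  refine pow_not_injective_of_two_dvd (hgcd ▸ Nat.gcd_dvd_left ..) ?_ hbij.injective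
  exact hcard ▸ hgcd ▸ Nat.gcd_dvd_right ..
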